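/- arXiv:1606.04611 — 4 statements merged into one kernel-verified Lean document; each statement's English description precedes it below -/
import Mathlib

section
/- Let k be a number field with ring of integers A, and let p be a prime number that is unramified in k. Then the cyclotomic polynomial Φ_p(X) = X^{p-1} + ⋯ + X + 1 is irreducible in k[X]. -/
/-!
Let `P` be a prime of `𝓞 k` above `p`. Since `(p)` is squarefree, `p ∉ P²`, so `Φ_p(X + 1)`,
whose non-leading coefficients are the binomial coefficients `(p choose i)` with constant term
`p`, is Eisenstein at `P`. Hence it is irreducible over `𝓞 k`, and by Gauss's lemma over `k`.
-/

open NumberField Polynomial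

namespace Polynomial

theorem Monic.isEisensteinAt_map {R S : Type*} [CommRing R] [CommRing S] {f : R[X]}
    (hf : f.Monic) {I : Ideal R} (hI : f.IsWeaklyEisensteinAt I) (φ : R →+* S) {J : Ideal S}
    (hIJ : I.map φ ≤ J) (h0 : φ (f.coeff 0) ∉ J ^ 2) : (f.map φ).IsEisensteinAt J := by
  refine (hf.map φ).isEisensteinAt_of_mem_of_notMem ?_ (fun hn => hIJ ((hI.map φ).mem hn)) ?_
  · rintro rfl
    rw [Ideal.top_pow] at h0
    exact h0 Submodule.mem_top
  · rwa [coeff_map]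

theorem cyclotomic_comp_X_add_one_isEisensteinAt_of_mem {R : Type*} [CommRing R] (p : ℕ)
    [Fact p.Prime] {P : Ideal R} (hp : (p : R) ∈ P) (hp2 : (p : R) ∉ P ^ 2) :
    ((cyclotomic p R).comp (X + 1)).IsEisensteinAt P := by
  have hmonic : ((cyclotomic p ℤ).comp (X + 1)).Monic := by
    simpa using (cyclotomic.monic p ℤ).comp_X_add_C 1
  have hcoeff : ((cyclotomic p ℤ).comp (X + 1)).coeff 0 = p := by
    rw [coeff_zero_eq_eval_zero, eval_comp, eval_add, eval_X, eval_one, zero_add,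
      eval_one_cyclotomic_prime]
  have := hmonic.isEisensteinAt_map
    (cyclotomic_comp_X_add_one_isEisensteinAt p).isWeaklyEisensteinAt (Int.castRingHom R)
    (by simpa [Ideal.map_span] using hp) (by simpa [hcoeff] using hp2)
  simpa [Polynomial.map_comp] using this

theorem cyclotomic.irreducible_of_natCast_mem_of_notMem_sq {R K : Type*} [CommRing R]
    [IsDomain R] [IsIntegrallyClosed R] [Field K] [Algebra R K] [IsFractionRing R K]
    (p : ℕ) [Fact p.Prime] {P : Ideal R} [P.IsPrime] (hp : (p : R) ∈ P) (hp2 : (p : R) ∉ P ^ 2) :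
    Irreducible (cyclotomic p K) := by
  have hmonic : ((cyclotomic p R).comp (X + 1)).Monic := by
    simpa using (cyclotomic.monic p R).comp_X_add_C 1
  have hdeg : 0 < ((cyclotomic p R).comp (X + 1)).natDegree := by
    rw [natDegree_comp, ← C_1, natDegree_X_add_C, mul_one, natDegree_cyclotomic,
      Nat.totient_prime Fact.out]
    exact Nat.sub_pos_of_lt (Fact.out : p.Prime).one_lt
  have hR : Irreducible ((cyclotomic p R).comp (X + 1)) :=
    (cyclotomic_comp_X_add_one_isEisensteinAt_of_mem p hp hp2).irreducible ‹_›
      hmonic.isPrimitive hdeg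
  have hK : Irreducible ((cyclotomic p K).comp (X + 1)) := by
    simpa [Polynomial.map_comp] using
      (hmonic.irreducible_iff_irreducible_map_fraction_map (K := K)).1 hR
  rw [← MulEquiv.irreducible_iff (taylorEquiv (1 : K)).toMulEquiv]
  convert hK using 1
  exact (taylor_apply 1 _).trans (by rw [C_1])

end Polynomial

theorem Squarefree.notMem_sq_of_ne_top {R : Type*} [CommRing R] [IsDedekindDomain R] {x : R}
    (hx : Squarefree (Ideal.span {x})) {P : Ideal R} (hP : P ≠ ⊤) : x ∉ P ^ 2 := by
  intro h
  refine hP (Ideal.isUnit_iff.1 (hx P ?_))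
  rwa [Ideal.dvd_iff_le, ← sq, Ideal.span_singleton_le_iff_mem]

theorem exists_isPrime_natCast_mem {S : Type*} [CommRing S] [Algebra.IsIntegral ℤ S]
    [FaithfulSMul ℤ S] {p : ℕ} (hp : p.Prime) : ∃ P : Ideal S, P.IsPrime ∧ (p : S) ∈ P := by
  have : Fact p.Prime := ⟨hp⟩
  obtain ⟨⟨P, hP, _⟩⟩ := (Ideal.span {(p : ℤ)}).nonempty_primesOver (S := S)
  refine ⟨P, hP, ?_⟩
  simpa using (Ideal.mem_of_liesOver P _ (p : ℤ)).1 (Ideal.mem_span_singleton_self _)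

/-- if the prime `p` is unramified in the number field `k` (i.e. `p·𝓞 k` is a
product of distinct prime ideals, equivalently the ideal `(p)` is squarefree), then
`Φ_p(X) = X^(p-1) + ⋯ + X + 1` is irreducible in `k[X]`. -/
theorem stmt_0 (k : Type) [Field k] [NumberField k] (p : ℕ) (hp : p.Prime)
    (hur : Squarefree (Ideal.span {(p : 𝓞 k)} : Ideal (𝓞 k))) :
    Irreducible (∑ i ∈ Finset.range p, (Polynomial.X : k[X]) ^ i) := by
  have : Fact p.Prime := ⟨hp⟩
  obtain ⟨P, hP, hpP⟩ := exists_isPrime_natCast_mem (S := 𝓞 k) hp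
  rw [← cyclotomic_prime]
  exact cyclotomic.irreducible_of_natCast_mem_of_notMem_sq p hpP
    (hur.notMem_sq_of_ne_top hP.ne_top)
end

section
/- Let k be a number field and p a prime number unramified in k. Then the degree [k(ζ_p) : k] equals p − 1, where ζ_p is a primitive p-th root of unity. -/
/-!
If `p` is unramified in `k`, some prime `P` of `𝓞 k` above `p` has ramification index one, i.e.
`p ∉ P²`. The constant term of `Φ_p(X + 1)` is `p` and its other non-leading coefficients are
divisible by `p`, so `Φ_p(X + 1)` is Eisenstein at `P` and hence irreducible over `𝓞 k`, and by
Gauss's lemma over `k`. Thus `Φ_p` is the minimal polynomial of `ζ` over `k`, of degree `p - 1`.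
-/

open NumberField IntermediateField Polynomial

theorem Polynomial.IsWeaklyEisensteinAt.isEisensteinAt_map {R S : Type*} [CommRing R]
    [CommRing S] {𝓟 : Ideal R} {f : R[X]} (hf : f.IsWeaklyEisensteinAt 𝓟) (hmo : f.Monic)
    (φ : R →+* S) {Q : Ideal S} (hQ : Q ≠ ⊤) (hle : 𝓟.map φ ≤ Q) (h0 : φ (f.coeff 0) ∉ Q ^ 2) :
    (f.map φ).IsEisensteinAt Q :=
  (hmo.map φ).isEisensteinAt_of_mem_of_notMem hQ (fun hn ↦ hle ((hf.map φ).mem hn))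
    (by rwa [coeff_map])

theorem Ideal.map_not_le_sq_of_isUnramifiedAt {R S : Type*} [CommRing R] [IsDomain R]
    [CommRing S] [IsDedekindDomain S] [Algebra R S] [Module.IsTorsionFree R S]
    [Algebra.EssFiniteType R S] {p : Ideal R} (hp : p ≠ ⊥) (P : Ideal S) [P.IsPrime]
    [P.LiesOver p] [Algebra.IsUnramifiedAt R P] : ¬ p.map (algebraMap R S) ≤ P ^ 2 := by
  rw [← Ideal.ramificationIdx'_ne_one_iff (map_le_of_le_comap (P.over_def p).le), not_not,
    ramificationIdx'_eq_ramificationIdx p P hp]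
  exact P.ramificationIdx_eq_one R

theorem NumberField.exists_isMaximal_natCast_mem_notMem_sq_of_not_dvd_discr (k : Type*)
    [Field k] [NumberField k] {p : ℕ} (hp : p.Prime) (hur : ¬ (p : ℤ) ∣ NumberField.discr k) :
    ∃ P : Ideal (𝓞 k), P.IsMaximal ∧ (p : 𝓞 k) ∈ P ∧ (p : 𝓞 k) ∉ P ^ 2 := by
  have hpZ : Prime (p : ℤ) := Nat.prime_iff_prime_int.mp hp
  have : (Ideal.span {(p : ℤ)}).IsMaximal :=
    PrincipalIdealRing.isMaximal_of_irreducible hpZ.irreducible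
  obtain ⟨P, hPmax, hPp⟩ :=
    Ideal.exists_maximal_ideal_liesOver_of_isIntegral (S := 𝓞 k) (Ideal.span {(p : ℤ)})
  have := (not_dvd_discr_iff_forall_liesOver k (𝓞 k) hpZ).mp hur P hPmax hPp
  have hsq := Ideal.map_not_le_sq_of_isUnramifiedAt (p := Ideal.span {(p : ℤ)})
    (by simpa using hpZ.ne_zero) P
  have hpP : (p : ℤ) ∈ P.under ℤ :=
    P.over_def (Ideal.span {(p : ℤ)}) ▸ Ideal.mem_span_singleton_self _
  refine ⟨P, hPmax, by simpa using hpP, fun h ↦ hsq ?_⟩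
  simpa [Ideal.map_span, Ideal.span_le] using h

theorem Polynomial.irreducible_cyclotomic_comp_X_add_one_of_not_dvd_discr (k : Type*) [Field k]
    [NumberField k] {p : ℕ} (hp : p.Prime) (hur : ¬ (p : ℤ) ∣ NumberField.discr k) :
    Irreducible ((cyclotomic p k).comp (X + 1)) := by
  have : Fact p.Prime := ⟨hp⟩
  obtain ⟨P, hPmax, hpP, hpP2⟩ := exists_isMaximal_natCast_mem_notMem_sq_of_not_dvd_discr k hp hur
  set f := (cyclotomic p ℤ).comp (X + 1)
  have hmo : f.Monic := by simpa using (cyclotomic.monic p ℤ).comp_X_add_C 1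
  have hEis : (f.map (algebraMap ℤ (𝓞 k))).IsEisensteinAt P := by
    refine (cyclotomic_comp_X_add_one_isEisensteinAt p).isWeaklyEisensteinAt.isEisensteinAt_map
      hmo _ hPmax.ne_top ?_ ?_
    · simpa [Ideal.map_span, Ideal.span_le] using hpP
    · simpa [f, coeff_zero_eq_eval_zero, eval_one_cyclotomic_prime] using hpP2
  have hirr : Irreducible (f.map (algebraMap ℤ (𝓞 k))) :=
    hEis.irreducible hPmax.isPrime (hmo.map _).isPrimitive (by
      rw [hmo.natDegree_map, natDegree_comp, ← C_1, natDegree_X_add_C, natDegree_cyclotomic,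
        Nat.totient_prime hp, mul_one]
      exact Nat.sub_pos_of_lt hp.one_lt)
  have hirrk := (hmo.map (algebraMap ℤ (𝓞 k))).irreducible_iff_irreducible_map_fraction_map
    (K := k) |>.mp hirr
  rw [Polynomial.map_map, ← IsScalarTower.algebraMap_eq] at hirrk
  simpa [f, map_comp] using hirrk

theorem Polynomial.irreducible_cyclotomic_of_not_dvd_discr (k : Type*) [Field k]
    [NumberField k] {p : ℕ} (hp : p.Prime) (hur : ¬ (p : ℤ) ∣ NumberField.discr k) :
    Irreducible (cyclotomic p k) := by
  rw [← MulEquiv.irreducible_iff (algEquivAevalXAddC (1 : k)), algEquivAevalXAddC_apply,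
    ← comp_eq_aeval, C_1]
  exact irreducible_cyclotomic_comp_X_add_one_of_not_dvd_discr k hp hur

/-- if `p` is a prime unramified in the number field `k` (equivalently,
`p` does not divide the discriminant of `k`), then `[k(ζ_p) : k] = p - 1`. -/
theorem stmt_1 (k : Type) [Field k] [NumberField k] (p : ℕ) (hp : p.Prime)
    (hur : ¬ ((p : ℤ) ∣ NumberField.discr k))
    (ζ : AlgebraicClosure k) (hζ : IsPrimitiveRoot ζ p) :
    Module.finrank k (IntermediateField.adjoin k {ζ} :
      IntermediateField k (AlgebraicClosure k)) = p - 1 := by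
  have : NeZero (p : k) := ⟨by exact_mod_cast hp.ne_zero⟩
  rw [adjoin.finrank (Algebra.IsIntegral.isIntegral ζ),
    ← hζ.minpoly_eq_cyclotomic_of_irreducible (irreducible_cyclotomic_of_not_dvd_discr k hp hur),
    natDegree_cyclotomic, Nat.totient_prime hp]
end

section
/- Let π be a finite group and M a π-lattice with a flabby resolution 0 → M → Q → E → 0 (Q permutation, E flabby). Then the similarity class [E] in the flabby class monoid F_π is uniquely determined by M: if 0 → M → Q' → E' → 0 is another flabby resolution, then E ⊕ Q'' ≅ E' ⊕ Q''' for some permutation lattices Q'', Q'''. -/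
open scoped Classical

/-- A bundled `G`-lattice: a finitely generated `ℤ`-free abelian group with `G`-action. -/
structure LatticeRep (G : Type) [Group G] where
  carrier : Type
  [acg : AddCommGroup carrier]
  [mact : DistribMulAction G carrier]
  [fin : Module.Finite ℤ carrier]
  [free : Module.Free ℤ carrier]

attribute [instance] LatticeRep.acg LatticeRep.mact LatticeRep.fin LatticeRep.free

/-- A `G`-lattice is a permutation lattice if it has a `ℤ`-basis permuted by `G`. -/
def IsPermutationLattice (G : Type) [Group G] (M : Type) [AddCommGroup M]
    [DistribMulAction G M] : Prop :=
  ∃ (n : ℕ) (b : Module.Basis (Fin n) ℤ M), ∀ g : G, ∃ e : Equiv.Perm (Fin n), ∀ i, g • (b i) = b (e i)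

/-- Flabbiness: the Tate cohomology `Ĥ⁻¹(H, M)` vanishes for every subgroup `H ≤ G`,
i.e. every element killed by the norm of `H` lies in the augmentation submodule. -/
def IsFlabby (G : Type) [Group G] [Fintype G] (M : Type) [AddCommGroup M]
    [DistribMulAction G M] : Prop :=
  ∀ H : Subgroup G, ∀ m : M, (∑ h ∈ (H : Set G).toFinset, h • m) = 0 →
    m ∈ AddSubgroup.closure {x : M | ∃ h ∈ H, ∃ y : M, x = h • y - y}

/-- Coflabbiness: `H¹(H, M) = 0` for every subgroup `H ≤ G`: every `1`-cocycle is a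
coboundary. -/
def IsCoflabby (G : Type) [Group G] (M : Type) [AddCommGroup M]
    [DistribMulAction G M] : Prop :=
  ∀ H : Subgroup G, ∀ f : H → M, (∀ g h : H, f (g * h) = f g + (g : G) • f h) →
    ∃ m : M, ∀ g : H, f g = (g : G) • m - m

/-- An equivariant isomorphism of abelian groups with `G`-action. -/
def EqvIso (G : Type) [Group G] (M N : Type) [AddCommGroup M] [AddCommGroup N]
    [DistribMulAction G M] [DistribMulAction G N] : Prop :=
  ∃ e : M ≃+ N, ∀ (g : G) (x : M), e (g • x) = g • e x

/-- Two lattices are similar if they become isomorphic after adding permutation lattices. -/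
def SimilarLattices (G : Type) [Group G] (M N : Type) [AddCommGroup M] [AddCommGroup N]
    [DistribMulAction G M] [DistribMulAction G N] : Prop :=
  ∃ Q₁ Q₂ : LatticeRep G, IsPermutationLattice G Q₁.carrier ∧
    IsPermutationLattice G Q₂.carrier ∧ EqvIso G (M × Q₁.carrier) (N × Q₂.carrier)

/-- An invertible lattice: a direct summand of a permutation lattice. -/
def IsInvertibleLattice (G : Type) [Group G] (M : Type) [AddCommGroup M]
    [DistribMulAction G M] : Prop :=
  ∃ N Q : LatticeRep G, IsPermutationLattice G Q.carrier ∧ EqvIso G (M × N.carrier) Q.carrier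

/-- `0 → M → Q → E → 0` is a flabby resolution: `Q` is a permutation lattice, `E` is flabby,
the maps are `G`-equivariant, and the sequence is exact. -/
def IsFlabbyResolution (G : Type) [Group G] [Fintype G] (M : Type) [AddCommGroup M]
    [DistribMulAction G M] (Q E : LatticeRep G)
    (f : M →+ Q.carrier) (g : Q.carrier →+ E.carrier) : Prop :=
  IsPermutationLattice G Q.carrier ∧ IsFlabby G E.carrier ∧
    (∀ (σ : G) (x : M), f (σ • x) = σ • f x) ∧
    (∀ (σ : G) (x : Q.carrier), g (σ • x) = σ • g x) ∧
    Function.Injective f ∧ Function.Surjective g ∧ g.ker = f.range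

/-!
The heart of the matter is that an equivariant extension `0 → P → X → F → 0` of a flabby lattice
`F` by a permutation lattice `P` splits, i.e. `Ext¹_G(F, ℤ[G/H]) = H¹(H, Hom(F, ℤ)) = 0`. Granting
this, `f'` extends along `f` to an equivariant `a : Q → Q'`, the sequence
`0 → Q → E ⊕ Q' → E' → 0` given by `q ↦ (g q, a q)` and `(e, q') ↦ g' q' - c e` (where
`c ∘ g = g' ∘ a`) is exact, and splitting it yields `E ⊕ Q' ≅ E' ⊕ Q`.

The splitting is built one coordinate of the permutation basis at a time, from functionals on `X`
invariant under the stabilizer `H` of the coordinate. Averaging an arbitrary ℤ-linear extension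
over `H` produces an invariant one with values in `ℚ`; the error term descends to `F`, and
flabbiness (the kernel of the norm of `H` is spanned by the `h • y - y`) is exactly what allows it
to be replaced by an integral one.
-/
open Function MulAction

section IntegralSplitting

variable {A X F : Type*} [AddCommGroup A] [AddCommGroup X] [AddCommGroup F]

theorem Function.Exact.exists_retraction_of_projective [Module.Projective ℤ F] {ι : A →+ X}
    {π : X →+ F} (hexact : Exact ι π) (hι : Injective ι) (hπ : Surjective π) :
    ∃ r : X →+ A, ∀ a, r (ι a) = a := by
  obtain ⟨s, hs⟩ :=
    π.toIntLinearMap.exists_rightInverse_of_surjective (LinearMap.range_eq_top.2 hπ)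
  have hsplit := Exact.split_tfae (f := ι.toIntLinearMap) (g := π.toIntLinearMap) hexact hι hπ
  obtain ⟨r, hr⟩ := (hsplit.out 0 1).mp (⟨s, hs⟩ : ∃ l, π.toIntLinearMap ∘ₗ l = .id)
  exact ⟨r.toAddMonoidHom, LinearMap.congr_fun hr⟩

theorem AddMonoidHom.exists_retraction_ker [Module.Finite ℤ X] [Module.IsTorsionFree ℤ F]
    (L : X →+ F) : ∃ p : X →+ X, (∀ x, L (p x) = 0) ∧ ∀ x, L x = 0 → p x = x := by
  let L' := L.toIntLinearMap
  have hexact : Exact (LinearMap.ker L').subtype L'.rangeRestrict := fun x => by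
    rw [← LinearMap.mem_ker, LinearMap.ker_rangeRestrict]
    exact ⟨fun hx => ⟨⟨x, hx⟩, rfl⟩, by rintro ⟨y, rfl⟩; exact y.2⟩
  obtain ⟨r, hr⟩ := Exact.exists_retraction_of_projective
    (ι := (LinearMap.ker L').subtype.toAddMonoidHom) (π := L'.rangeRestrict.toAddMonoidHom)
    hexact Subtype.val_injective L'.surjective_rangeRestrict
  exact ⟨(LinearMap.ker L').subtype.toAddMonoidHom.comp r, fun x => (r x).2,
    fun x hx => congrArg Subtype.val (hr ⟨x, hx⟩)⟩

end IntegralSplitting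

section Norm

variable {G : Type} [Group G] [Fintype G] (H : Subgroup G)

theorem Subgroup.sum_toFinset_mul_right {M : Type*} [AddCommMonoid M] {g : G} (hg : g ∈ H)
    (f : G → M) : ∑ h ∈ (H : Set G).toFinset, f (h * g) = ∑ h ∈ (H : Set G).toFinset, f h := by
  refine Finset.sum_nbij' (· * g) (· * g⁻¹) ?_ ?_ ?_ ?_ fun _ _ => rfl <;> intro h hh <;>
    simp_all [H.mul_mem_cancel_right]

variable (V : Type*) [AddCommGroup V] [DistribMulAction G V]

noncomputable def normMap : V →+ V :=
  ∑ h ∈ (H : Set G).toFinset, DistribSMul.toAddMonoidHom V h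

noncomputable def averageMap (ψ : V →+ ℚ) : V →+ ℚ :=
  ((H : Set G).toFinset.card : ℚ)⁻¹ •
    ∑ h ∈ (H : Set G).toFinset, ψ.comp (DistribSMul.toAddMonoidHom V h)

variable {H V}

theorem normMap_apply (y : V) : normMap H V y = ∑ h ∈ (H : Set G).toFinset, h • y := by
  simp [normMap]

theorem normMap_smul {h : G} (hh : h ∈ H) (y : V) : normMap H V (h • y) = normMap H V y := by
  simp only [normMap_apply, smul_smul]
  exact H.sum_toFinset_mul_right hh (· • y)

theorem averageMap_apply (ψ : V →+ ℚ) (x : V) :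
    averageMap H V ψ x =
      ((H : Set G).toFinset.card : ℚ)⁻¹ * ∑ h ∈ (H : Set G).toFinset, ψ (h • x) := by
  simp [averageMap]

theorem averageMap_smul (ψ : V →+ ℚ) {h : G} (hh : h ∈ H) (x : V) :
    averageMap H V ψ (h • x) = averageMap H V ψ x := by
  simp only [averageMap_apply, smul_smul]
  rw [H.sum_toFinset_mul_right hh fun k => ψ (k • x)]

theorem averageMap_eq_of_forall_smul {ψ : V →+ ℚ} {x : V} (hx : ∀ h ∈ H, ψ (h • x) = ψ x) :
    averageMap H V ψ x = ψ x := by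
  have hN : ((H : Set G).toFinset.card : ℚ) ≠ 0 :=
    Nat.cast_ne_zero.2 (Finset.card_pos.2 ⟨1, by simp [H.one_mem]⟩).ne'
  rw [averageMap_apply, Finset.sum_congr rfl fun h hh => hx h (by simpa using hh),
    Finset.sum_const, nsmul_eq_mul, inv_mul_cancel_left₀ hN]

end Norm

theorem IsFlabby.exists_int_of_integral_differences {G F : Type} [Group G] [Fintype G]
    [AddCommGroup F] [DistribMulAction G F] [Module.Finite ℤ F] [Module.Free ℤ F]
    (hF : IsFlabby G F) (H : Subgroup G) (μ : F →+ ℚ)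
    (hμ : ∀ h ∈ H, ∀ y : F, μ (h • y - y) ∈ (Int.castAddHom ℚ).range) :
    ∃ α : F →+ ℤ, ∀ h ∈ H, ∀ y, ((α (h • y) - α y : ℤ) : ℚ) = μ (h • y - y) := by
  -- `α = μ ∘ p` for a retraction `p` onto the kernel of the norm, where `μ` is integral by
  -- flabbiness.
  obtain ⟨p, hpN, hp⟩ := (normMap H F).exists_retraction_ker
  have hint : ∀ y, ∃ a : ℤ, (a : ℚ) = μ (p y) := by
    intro y
    have hcl := hF H (p y) (by rw [← normMap_apply]; exact hpN y)
    refine (AddSubgroup.closure_le (K := (Int.castAddHom ℚ).range.comap μ)).2 ?_ hcl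
    rintro _ ⟨h, hh, z, rfl⟩
    exact hμ h hh z
  choose α hα using hint
  have hα_add : ∀ y z, α (y + z) = α y + α z := fun y z =>
    Int.cast_injective (α := ℚ) (by rw [Int.cast_add, hα, hα, hα, map_add, map_add])
  refine ⟨AddMonoidHom.mk' α hα_add, fun h hh y => ?_⟩
  have hpy : p (h • y - y) = h • y - y := hp _ (by rw [map_sub, normMap_smul hh, sub_self])
  rw [Int.cast_sub, AddMonoidHom.mk'_apply, hα, hα, ← map_sub, ← map_sub, hpy]

structure IsEquivariantShortExact (G : Type*) [Monoid G] {A X F : Type*} [AddCommGroup A]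
    [AddCommGroup X] [AddCommGroup F] [DistribMulAction G A] [DistribMulAction G X]
    [DistribMulAction G F] (ι : A →+ X) (π : X →+ F) : Prop where
  left_map_smul : ∀ (g : G) (a : A), ι (g • a) = g • ι a
  right_map_smul : ∀ (g : G) (x : X), π (g • x) = g • π x
  exact : Exact ι π
  injective : Injective ι
  surjective : Surjective π

theorem IsFlabby.exists_invariant_extension {G A X F : Type} [Group G] [Fintype G]
    [AddCommGroup A] [AddCommGroup X] [AddCommGroup F] [DistribMulAction G A]
    [DistribMulAction G X] [DistribMulAction G F] [Module.Finite ℤ F] [Module.Free ℤ F]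
    (hF : IsFlabby G F) {ι : A →+ X} {π : X →+ F} (hs : IsEquivariantShortExact G ι π)
    (H : Subgroup G) (l : A →+ ℤ) (hl : ∀ h ∈ H, ∀ a, l (h • a) = l a) :
    ∃ φ : X →+ ℤ, (∀ h ∈ H, ∀ x, φ (h • x) = φ x) ∧ ∀ a, φ (ι a) = l a := by
  obtain ⟨r, hr⟩ := hs.exact.exists_retraction_of_projective hs.injective hs.surjective
  set ψ := l.comp r with hψ
  -- `ω` has the `H`-differences of `ψ` but vanishes on `ι A`, so it descends to `F`.
  let ω : X →+ ℚ := (Int.castAddHom ℚ).comp ψ - averageMap H X ((Int.castAddHom ℚ).comp ψ)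
  have hω_ι (a : A) : ω (ι a) = 0 := by
    refine sub_eq_zero.2 (averageMap_eq_of_forall_smul fun h hh => ?_).symm
    simp [← hs.left_map_smul, hψ, hr, hl h hh]
  have hω_smul (h : G) (hh : h ∈ H) (x : X) : ω (h • x - x) = ψ (h • x) - ψ x := by
    simp [ω, averageMap_smul _ hh]
  have hω_ker : π.ker ≤ ω.ker := fun x hx => by
    obtain ⟨a, rfl⟩ := (hs.exact x).1 hx
    exact hω_ι a
  set μ := π.liftOfSurjective hs.surjective ⟨ω, hω_ker⟩
  have hμ : ∀ x, μ (π x) = ω x := π.liftOfRightInverse_comp_apply _ _ _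
  have hμ_smul : ∀ h ∈ H, ∀ x, μ (h • π x - π x) = ψ (h • x) - ψ x := fun h hh x => by
    rw [← hs.right_map_smul, ← map_sub, hμ, hω_smul h hh x]
  obtain ⟨α, hα⟩ := hF.exists_int_of_integral_differences H μ fun h hh y => by
    obtain ⟨x, rfl⟩ := hs.surjective y
    exact ⟨ψ (h • x) - ψ x, by simp [hμ_smul h hh x]⟩
  refine ⟨ψ - α.comp π, fun h hh x => ?_, fun a => ?_⟩
  · have : α (h • π x) - α (π x) = ψ (h • x) - ψ x := by
      exact_mod_cast (hα h hh (π x)).trans (hμ_smul h hh x)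
    simp only [AddMonoidHom.sub_apply, AddMonoidHom.comp_apply, hs.right_map_smul]
    linarith
  · simp [hψ, hr, (hs.exact _).2 ⟨a, rfl⟩]

theorem IsPermutationLattice.exists_basis {G P : Type} [Group G] [AddCommGroup P]
    [DistribMulAction G P] (hP : IsPermutationLattice G P) :
    ∃ (n : ℕ) (_ : MulAction G (Fin n)) (b : Module.Basis (Fin n) ℤ P),
      ∀ (g : G) (i : Fin n), g • b i = b (g • i) := by
  obtain ⟨n, b, hb⟩ := hP
  choose e he using hb
  refine ⟨n, { smul := fun g i => e g i, one_smul := ?one, mul_smul := ?mul }, b, he⟩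
  case one =>
    refine fun i => b.injective ?_
    change b (e 1 i) = b i
    rw [← he, one_smul]
  case mul =>
    refine fun g h i => b.injective ?_
    change b (e (g * h) i) = b (e g (e h i))
    rw [← he, ← he, ← he, mul_smul]

theorem Module.Basis.coord_smul_smul {G κ P : Type*} [Group G] [MulAction G κ] [AddCommGroup P]
    [DistribMulAction G P] (b : Module.Basis κ ℤ P) (hb : ∀ (g : G) (i : κ), g • b i = b (g • i))
    (g : G) (i : κ) (p : P) : b.coord (g • i) (g • p) = b.coord i p := by
  have : (b.coord (g • i)).comp (DistribSMul.toAddMonoidHom P g).toIntLinearMap = b.coord i :=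
    b.ext fun k => by simp [hb, Finsupp.single_apply]
  exact LinearMap.congr_fun this p

theorem exists_equivariant_family {G κ X B : Type*} [Group G] [MulAction G κ] [AddCommGroup X]
    [DistribMulAction G X] [AddCommGroup B] (φ : κ → X →+ B)
    (hφ : ∀ c, ∀ g ∈ stabilizer G c, ∀ x, φ c (g • x) = φ c x) :
    ∃ ψ : κ → X →+ B, (∀ (g : G) j x, ψ (g • j) (g • x) = ψ j x) ∧
      ∀ j, ∃ g : G, ∀ x, ψ j x = φ (g • j) (g • x) := by
  let rep : κ → κ := fun j => (Quotient.mk'' j : orbitRel.Quotient G κ).out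
  have hrep_smul : ∀ (g : G) j, rep (g • j) = rep j := fun g j => by
    simp only [rep, Quotient.sound' (orbitRel_apply.2 (mem_orbit j g))]
  have hrep : ∀ j, ∃ g : G, g • j = rep j := fun j => Quotient.mk_out' (s₁ := orbitRel G κ) j
  choose s hs using hrep
  refine ⟨fun j => (φ (rep j)).comp (DistribSMul.toAddMonoidHom X (s j)), fun g j x => ?_,
    fun j => ⟨s j, fun x => by rw [hs]; rfl⟩⟩
  have hfix : s (g • j) * g * (s j)⁻¹ ∈ stabilizer G (rep j) := by
    rw [mem_stabilizer_iff, mul_smul, mul_smul, ← hs j, inv_smul_smul, hs, hrep_smul, hs]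
  calc φ (rep (g • j)) (s (g • j) • g • x)
      = φ (rep j) ((s (g • j) * g * (s j)⁻¹) • s j • x) := by
        simp only [hrep_smul, smul_smul, inv_mul_cancel_right]
    _ = φ (rep j) (s j • x) := hφ _ _ hfix _

theorem IsFlabby.exists_equivariant_extension {G A X F P : Type} [Group G] [Fintype G]
    [AddCommGroup A] [AddCommGroup X] [AddCommGroup F] [AddCommGroup P] [DistribMulAction G A]
    [DistribMulAction G X] [DistribMulAction G F] [DistribMulAction G P] [Module.Finite ℤ F]
    [Module.Free ℤ F] (hF : IsFlabby G F) (hP : IsPermutationLattice G P) {ι : A →+ X}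
    {π : X →+ F} (hs : IsEquivariantShortExact G ι π) (u : A →+ P)
    (hu : ∀ (g : G) (a : A), u (g • a) = g • u a) :
    ∃ v : X →+ P, (∀ (g : G) (x : X), v (g • x) = g • v x) ∧ ∀ a, v (ι a) = u a := by
  obtain ⟨n, _, b, hb⟩ := hP.exists_basis
  have hcoord (c : Fin n) : ∃ φ : X →+ ℤ, (∀ h ∈ stabilizer G c, ∀ x, φ (h • x) = φ x) ∧
      ∀ a, φ (ι a) = b.coord c (u a) := by
    refine hF.exists_invariant_extension hs _ ((b.coord c).toAddMonoidHom.comp u) fun h hh a => ?_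
    simp only [AddMonoidHom.comp_apply, LinearMap.toAddMonoidHom_coe, hu]
    conv_lhs => rw [← mem_stabilizer_iff.1 hh]
    exact b.coord_smul_smul hb h c (u a)
  choose φ hφ_smul hφ_ι using hcoord
  obtain ⟨ψ, hψ_smul, hψ⟩ := exists_equivariant_family φ hφ_smul
  have hψ_ι (j : Fin n) (a : A) : ψ j (ι a) = b.coord j (u a) := by
    obtain ⟨g, hg⟩ := hψ j
    rw [hg, ← hs.left_map_smul, hφ_ι, hu, b.coord_smul_smul hb]
  refine ⟨AddMonoidHom.mk' (fun x => ∑ j, ψ j x • b j) fun x y => by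
    simp only [map_add, add_smul, Finset.sum_add_distrib], fun g x => ?_, fun a => ?_⟩
  · simp only [AddMonoidHom.mk'_apply, Finset.smul_sum, smul_comm g, hb]
    exact (Equiv.sum_comp (toPerm g) _).symm.trans (by simp [hψ_smul])
  · simp only [AddMonoidHom.mk'_apply, hψ_ι, Module.Basis.coord_apply, b.sum_repr]

theorem IsFlabby.eqvIso_prod {G P X F : Type} [Group G] [Fintype G] [AddCommGroup P]
    [AddCommGroup X] [AddCommGroup F] [DistribMulAction G P] [DistribMulAction G X]
    [DistribMulAction G F] [Module.Finite ℤ F] [Module.Free ℤ F] (hF : IsFlabby G F)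
    (hP : IsPermutationLattice G P) {ι : P →+ X} {π : X →+ F}
    (hs : IsEquivariantShortExact G ι π) : EqvIso G X (F × P) := by
  obtain ⟨v, hv_smul, hv⟩ :=
    hF.exists_equivariant_extension hP hs (AddMonoidHom.id P) fun _ _ => rfl
  have hbij : Bijective (π.prod v) := by
    refine ⟨(injective_iff_map_eq_zero _).2 fun x hx => ?_, fun ⟨y, p⟩ => ?_⟩
    · obtain ⟨a, rfl⟩ := (hs.exact x).1 (congrArg Prod.fst hx)
      have : a = 0 := (hv a).symm.trans (congrArg Prod.snd hx)
      rw [this, map_zero]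
    · obtain ⟨x, rfl⟩ := hs.surjective y
      refine ⟨x + ι (p - v x), ?_⟩
      simp [hv, (hs.exact _).2 ⟨_, rfl⟩]
  exact ⟨AddEquiv.ofBijective _ hbij, fun g x => by simp [hs.right_map_smul, hv_smul]⟩

theorem IsEquivariantShortExact.exists_prod_of_extension {G M Q E Q' E' : Type*} [Group G]
    [AddCommGroup M] [AddCommGroup Q] [AddCommGroup E] [AddCommGroup Q'] [AddCommGroup E']
    [DistribMulAction G M] [DistribMulAction G Q] [DistribMulAction G E] [DistribMulAction G Q']
    [DistribMulAction G E'] {f : M →+ Q} {g : Q →+ E} {f' : M →+ Q'} {g' : Q' →+ E'}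
    (hs : IsEquivariantShortExact G f g) (hs' : IsEquivariantShortExact G f' g') (a : Q →+ Q')
    (ha_smul : ∀ (σ : G) (q : Q), a (σ • q) = σ • a q) (ha : ∀ m, a (f m) = f' m) :
    ∃ (i : Q →+ E × Q') (p : E × Q' →+ E'), IsEquivariantShortExact G i p := by
  have hker : g.ker ≤ (g'.comp a).ker := fun q hq => by
    obtain ⟨m, rfl⟩ := (hs.exact q).1 hq
    simp [ha, (hs'.exact _).2 ⟨m, rfl⟩]
  set c := g.liftOfSurjective hs.surjective ⟨g'.comp a, hker⟩
  have hc (q : Q) : c (g q) = g' (a q) := g.liftOfRightInverse_comp_apply _ _ _ q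
  have hc_smul (σ : G) (e : E) : c (σ • e) = σ • c e := by
    obtain ⟨q, rfl⟩ := hs.surjective e
    rw [← hs.right_map_smul, hc, hc, ha_smul, hs'.right_map_smul]
  refine ⟨g.prod a, g'.comp (AddMonoidHom.snd E Q') - c.comp (AddMonoidHom.fst E Q'),
    ⟨fun σ q => ?_, fun σ x => ?_, fun x => ?_, ?_, fun e => ?_⟩⟩
  · simp [hs.right_map_smul, ha_smul]
  · simp [hs'.right_map_smul, hc_smul, smul_sub]
  · obtain ⟨e, q'⟩ := x
    refine ⟨fun hx => ?_, fun ⟨q, hq⟩ => by simp [← hq, hc]⟩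
    obtain ⟨q, rfl⟩ := hs.surjective e
    have : g' (q' - a q) = 0 := by simpa [hc, sub_eq_zero] using hx
    obtain ⟨m, hm⟩ := (hs'.exact _).1 this
    exact ⟨q + f m, by simp [(hs.exact _).2 ⟨m, rfl⟩, ha, hm]⟩
  · refine (injective_iff_map_eq_zero _).2 fun q hq => ?_
    obtain ⟨m, rfl⟩ := (hs.exact q).1 (congrArg Prod.fst hq)
    have : f' m = 0 := (ha m).symm.trans (congrArg Prod.snd hq)
    rw [hs'.injective (this.trans (map_zero f').symm), map_zero]
  · obtain ⟨q', rfl⟩ := hs'.surjective e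
    exact ⟨(0, q'), by simp⟩

theorem stmt_10_general (G : Type) [Group G] [Fintype G] (M : Type) [AddCommGroup M]
    [DistribMulAction G M]
    (Q E Q' E' : LatticeRep G)
    (f : M →+ Q.carrier) (g : Q.carrier →+ E.carrier)
    (f' : M →+ Q'.carrier) (g' : Q'.carrier →+ E'.carrier)
    (h : IsFlabbyResolution G M Q E f g) (h' : IsFlabbyResolution G M Q' E' f' g') :
    SimilarLattices G E.carrier E'.carrier := by
  obtain ⟨hQ, hE, hf_smul, hg_smul, hf, hg, hker⟩ := h
  obtain ⟨hQ', hE', hf'_smul, hg'_smul, hf', hg', hker'⟩ := h'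
  have hs : IsEquivariantShortExact G f g :=
    ⟨hf_smul, hg_smul, AddMonoidHom.exact_iff.2 hker, hf, hg⟩
  have hs' : IsEquivariantShortExact G f' g' :=
    ⟨hf'_smul, hg'_smul, AddMonoidHom.exact_iff.2 hker', hf', hg'⟩
  obtain ⟨a, ha_smul, ha⟩ := hE.exists_equivariant_extension hQ' hs f' hf'_smul
  obtain ⟨i, p, hip⟩ := hs.exists_prod_of_extension hs' a ha_smul ha
  exact ⟨Q', Q, hQ', hQ, hE'.eqvIso_prod hQ hip⟩

/-- the similarity class of `E` in a flabby resolution `0 → M → Q → E → 0`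
depends only on `M`: given two flabby resolutions of `M`, the flabby quotients `E`, `E'`
become isomorphic after adding suitable permutation lattices. -/
theorem stmt_10 (G : Type) [Group G] [Fintype G] (M : Type) [AddCommGroup M]
    [DistribMulAction G M] [Module.Finite ℤ M] [Module.Free ℤ M]
    (Q E Q' E' : LatticeRep G)
    (f : M →+ Q.carrier) (g : Q.carrier →+ E.carrier)
    (f' : M →+ Q'.carrier) (g' : Q'.carrier →+ E'.carrier)
    (h : IsFlabbyResolution G M Q E f g) (h' : IsFlabbyResolution G M Q' E' f' g') :
    SimilarLattices G E.carrier E'.carrier :=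
  stmt_10_general G M Q E Q' E' f g f' g' h h'
end

section
/- Let p be a prime and K a field of characteristic zero containing a primitive p-th root of unity ζ_p. Let σ act on K(y_0,…,y_{p-1}) by σ(y_i) = ζ_p^i y_i and σ fixing K. Then the fixed field K(y_0,…,y_{p-1})^{⟨σ⟩} equals K(y_0, z_1, …, z_{p-1}) where z_i = y_{t^i mod p}/(y_{t^{i-1} mod p})^t for 1 ≤ i ≤ p−2 and z_{p-1} = y_1^p, for any integer t generating (ℤ/pℤ)^×; in particular the fixed field is rational of transcendence degree p over K. -/
/-!
Since `σ` multiplies each `y i` by a `p`-th root of unity, `σ` has order `p`, and by Artin's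
theorem `F` has degree `p` over the fixed field. The proposed generators are fixed:
`y_{t^i}` and `y_{t^(i-1)}^t` have the same eigenvalue `ζ^(t^i)`. Conversely, let `E` be the field
they generate. Then `y 1` has degree at most `p` over `E` because `y 1 ^ p ∈ E`, and it generates
`F` over `E`: starting from `y 1`, the relations `y_{t^i} = z_i * y_{t^(i-1)}^t` produce every
`y j` with `j ≠ 0`, as the powers of `t` exhaust `(ZMod p)ˣ`. So `E` lies in the fixed field
`F^σ` and `[F : E] ≤ p = [F : F^σ]`, hence they are equal.
-/

open MvPolynomial IntermediateField

theorem ZMod.exists_pow_eq_of_orderOf_eq {p : ℕ} [Fact p.Prime] {g : ZMod p}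
    (hg : orderOf g = p - 1) {a : ZMod p} (ha : a ≠ 0) : ∃ j < p - 1, g ^ j = a := by
  have hg0 : g ≠ 0 := by
    rintro rfl
    have := (Fact.out : p.Prime).two_le
    rw [orderOf_eq_zero_iff'.2 fun n hn => by simp [zero_pow hn.ne']] at hg
    omega
  set u := Units.mk0 g hg0
  have hu : orderOf u = p - 1 := by rw [← orderOf_units, Units.val_mk0, hg]
  have htop : Subgroup.zpowers u = ⊤ :=
    Subgroup.eq_top_of_card_eq _ <| by
      rw [Nat.card_zpowers, hu, Nat.card_eq_fintype_card, ZMod.card_units]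
  classical
  obtain ⟨j, hj, hja⟩ := Finset.mem_image.1 <|
    mem_zpowers_iff_mem_range_orderOf.1 (htop ▸ Subgroup.mem_top (Units.mk0 a ha))
  refine ⟨j, hu ▸ Finset.mem_range.1 hj, ?_⟩
  simpa [u] using congrArg Units.val hja

theorem IsFractionRing.adjoin_image_eq_top {K A F : Type*} [Field K] [CommRing A] [Algebra K A]
    [Field F] [Algebra A F] [IsFractionRing A F] [Algebra K F] [IsScalarTower K A F]
    {s : Set A} (hs : Algebra.adjoin K s = ⊤) :
    IntermediateField.adjoin K (algebraMap A F '' s) = ⊤ := by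
  rw [← IsFractionRing.algHom_fieldRange_eq_of_comp_eq_of_range_eq (f := AlgHom.id K F)
    (g := IsScalarTower.toAlgHom K A F) rfl]
  · exact AlgHom.fieldRange_eq_top.2 Function.surjective_id
  · rw [← Algebra.map_top, ← hs, AlgHom.map_adjoin]
    rfl

section FixedField

variable {K F : Type*} [Field K] [Field F] [Algebra K F]

theorem IntermediateField.mem_fixedField_zpowers_iff {σ : F ≃ₐ[K] F} {x : F} :
    x ∈ fixedField (Subgroup.zpowers σ) ↔ σ x = x := by
  rw [mem_fixedField_iff]
  refine ⟨fun h => h σ (Subgroup.mem_zpowers σ), fun h τ hτ => ?_⟩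
  have : σ ∈ MulAction.stabilizer (F ≃ₐ[K] F) x := h
  exact (Subgroup.zpowers_le.2 this) hτ

theorem AlgEquiv.eq_one_of_adjoin_eq_top {s : Set F} (hs : adjoin K s = ⊤) {σ : F ≃ₐ[K] F}
    (h : ∀ x ∈ s, σ x = x) : σ = 1 := by
  have hle : adjoin K s ≤ fixedField (Subgroup.zpowers σ) :=
    adjoin_le_iff.2 fun x hx => mem_fixedField_zpowers_iff.2 (h x hx)
  ext x
  exact mem_fixedField_zpowers_iff.1 (hle (hs ▸ mem_top))

theorem IntermediateField.finrank_fixedField_zpowers {σ : F ≃ₐ[K] F} (hσ : IsOfFinOrder σ) :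
    Module.finrank (fixedField (Subgroup.zpowers σ)) F = orderOf σ := by
  have : Finite (Subgroup.zpowers σ) := (finite_zpowers.2 hσ).to_subtype
  have := Fintype.ofFinite (Subgroup.zpowers σ)
  rw [← Nat.card_zpowers, Nat.card_eq_fintype_card]
  exact FixedPoints.finrank_eq_card (Subgroup.zpowers σ) F

theorem AlgEquiv.pow_apply_eq_mul {σ : F ≃ₐ[K] F} {x : F} {c : K}
    (h : σ x = algebraMap K F c * x) (n : ℕ) : (σ ^ n) x = algebraMap K F (c ^ n) * x := by
  induction n with
  | zero => simp
  | succ n ih =>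
    rw [pow_succ, AlgEquiv.mul_apply, h, map_mul, AlgEquiv.commutes, ih, pow_succ, map_mul]
    ring

theorem AlgEquiv.apply_div_pow_eq_self {σ : F ≃ₐ[K] F} {u v : F} {c d : K} {t : ℕ}
    (hu : σ u = algebraMap K F c * u) (hv : σ v = algebraMap K F d * v) (hcd : c = d ^ t)
    (hd : d ≠ 0) : σ (u / v ^ t) = u / v ^ t := by
  rw [map_div₀, map_pow, hu, hv, mul_pow, hcd, map_pow,
    mul_div_mul_left _ _ (pow_ne_zero _ ((map_ne_zero _).2 hd))]

end FixedField

theorem IntermediateField.finiteDimensional_of_adjoin_eq_top {E F : Type*} [Field E] [Field F]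
    [Algebra E F] {x : F} (hx : E⟮x⟯ = ⊤) (hint : IsIntegral E x) :
    FiniteDimensional E F := by
  have := adjoin.finiteDimensional hint
  rw [hx] at this
  exact topEquiv.toLinearEquiv.finiteDimensional

theorem IntermediateField.finrank_le_of_adjoin_eq_top_of_pow_mem {E F : Type*} [Field E]
    [Field F] [Algebra E F] {x : F} (hx : E⟮x⟯ = ⊤) {n : ℕ} (hn : n ≠ 0) {a : E}
    (ha : x ^ n = algebraMap E F a) : Module.finrank E F ≤ n := by
  have hroot : Polynomial.aeval x (Polynomial.X ^ n - Polynomial.C a) = 0 := by simp [ha]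
  have hint : IsIntegral E x :=
    ⟨_, Polynomial.monic_X_pow_sub_C a hn, by simpa [Polynomial.aeval_def] using hroot⟩
  rw [← finrank_top', ← hx, adjoin.finrank hint,
    ← Polynomial.natDegree_X_pow_sub_C (n := n) (r := a)]
  exact Polynomial.natDegree_le_natDegree <| minpoly.degree_le_of_ne_zero E x
    (Polynomial.X_pow_sub_C_ne_zero (Nat.pos_of_ne_zero hn) a) hroot

section DiagonalAction

variable {p : ℕ} [NeZero p] {K F : Type*} [Field K] [Field F] [Algebra K F] {ζ : K}
  {σ : F ≃ₐ[K] F} {y : Fin p → F}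

theorem orderOf_eq_of_apply_eq_mul_pow (hp : p.Prime) (hζ : IsPrimitiveRoot ζ p)
    (hy : adjoin K (Set.range y) = ⊤) (hy1 : y 1 ≠ 0)
    (hσ : ∀ i, σ (y i) = algebraMap K F (ζ ^ (i : ℕ)) * y i) : orderOf σ = p := by
  have : Fact p.Prime := ⟨hp⟩
  refine orderOf_eq_prime (AlgEquiv.eq_one_of_adjoin_eq_top hy ?_) fun h1 => ?_
  · rintro _ ⟨i, rfl⟩
    rw [AlgEquiv.pow_apply_eq_mul (hσ i), pow_right_comm, hζ.pow_eq_one, one_pow, map_one,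
      one_mul]
  · have h := hσ 1
    rw [h1, AlgEquiv.one_apply, Fin.val_one', Nat.mod_eq_of_lt hp.one_lt, pow_one] at h
    refine hζ.ne_one hp.one_lt ((algebraMap K F).injective ?_)
    rw [map_one]
    exact mul_right_cancel₀ hy1 (h.symm.trans (one_mul _).symm)

-- The paper's `z_i`, as `Fin.ofNat p n = ⟨n % p, _⟩`.
variable (y) in
def powIndexRatio (t i : ℕ) : F := y (Fin.ofNat p (t ^ i)) / y (Fin.ofNat p (t ^ (i - 1))) ^ t

theorem apply_powIndexRatio (hζ : IsPrimitiveRoot ζ p)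
    (hσ : ∀ i, σ (y i) = algebraMap K F (ζ ^ (i : ℕ)) * y i) {t i : ℕ} (hi : 1 ≤ i) :
    σ (powIndexRatio y t i) = powIndexRatio y t i := by
  have hmod : ∀ n, ζ ^ (n % p) = ζ ^ n := fun n => by rw [hζ.eq_orderOf, pow_mod_orderOf]
  refine AlgEquiv.apply_div_pow_eq_self (hσ _) (hσ _) ?_
    (pow_ne_zero _ (hζ.ne_zero (NeZero.ne p)))
  simp only [Fin.val_ofNat, hmod, ← pow_mul, ← pow_succ, Nat.sub_add_cancel hi]

theorem mem_of_powIndexRatio_mem_of_le (hp : p.Prime) {t : ℕ} {L : Subfield F}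
    (hy0 : ∀ i, y i ≠ 0) (h1 : y 1 ∈ L)
    (hz : ∀ i, 1 ≤ i → i ≤ p - 2 → powIndexRatio y t i ∈ L) :
    ∀ j ≤ p - 2, y (Fin.ofNat p (t ^ j)) ∈ L := by
  intro j hj
  induction j with
  | zero =>
    convert h1
    ext
    simp [Nat.mod_eq_of_lt hp.one_lt]
  | succ k ih =>
    rw [← div_mul_cancel₀ (y (Fin.ofNat p (t ^ (k + 1)))) (pow_ne_zero t (hy0 _))]
    exact L.mul_mem (hz (k + 1) (by omega) hj) (L.pow_mem (ih (by omega)) t)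

theorem mem_of_powIndexRatio_mem (hp : p.Prime) {t : ℕ} (ht : orderOf (t : ZMod p) = p - 1)
    {L : Subfield F} (hy0 : ∀ i, y i ≠ 0) (h0 : y 0 ∈ L) (h1 : y 1 ∈ L)
    (hz : ∀ i, 1 ≤ i → i ≤ p - 2 → powIndexRatio y t i ∈ L) (i : Fin p) :
    y i ∈ L := by
  have : Fact p.Prime := ⟨hp⟩
  rcases eq_or_ne i 0 with rfl | hi
  · exact h0
  have hi' : (i.val : ZMod p) ≠ 0 := by
    rw [Ne, ZMod.natCast_eq_zero_iff]
    exact fun hdvd => hi (Fin.ext (Nat.eq_zero_of_dvd_of_lt hdvd i.isLt))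
  obtain ⟨j, hj, htj⟩ := ZMod.exists_pow_eq_of_orderOf_eq ht hi'
  have hji : Fin.ofNat p (t ^ j) = i := by
    rw [← Nat.cast_pow, ZMod.natCast_eq_natCast_iff', Nat.mod_eq_of_lt i.isLt] at htj
    exact Fin.ext htj
  exact hji ▸ mem_of_powIndexRatio_mem_of_le hp hy0 h1 hz j (by omega)

theorem fixedField_zpowers_eq_adjoin (hp : p.Prime) (hζ : IsPrimitiveRoot ζ p)
    (hy : adjoin K (Set.range y) = ⊤) (hy0 : ∀ i, y i ≠ 0)
    (hσ : ∀ i, σ (y i) = algebraMap K F (ζ ^ (i : ℕ)) * y i)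
    {t : ℕ} (ht : orderOf (t : ZMod p) = p - 1) :
    fixedField (Subgroup.zpowers σ) =
      adjoin K ({y 0} ∪ {w | ∃ i, 1 ≤ i ∧ i ≤ p - 2 ∧ w = powIndexRatio y t i} ∪
        {y 1 ^ p}) := by
  set E := adjoin K
    ({y 0} ∪ {w | ∃ i, 1 ≤ i ∧ i ≤ p - 2 ∧ w = powIndexRatio y t i} ∪ {y 1 ^ p})
  have horder := orderOf_eq_of_apply_eq_mul_pow hp hζ hy (hy0 1) hσ
  have hle : E ≤ fixedField (Subgroup.zpowers σ) := by
    refine adjoin_le_iff.2 fun w hw => mem_fixedField_zpowers_iff.2 ?_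
    rcases hw with (rfl | ⟨i, hi, -, rfl⟩) | rfl
    · simp [hσ 0]
    · exact apply_powIndexRatio hζ hσ hi
    · rw [map_pow, hσ, mul_pow, ← map_pow, pow_right_comm, hζ.pow_eq_one, one_pow, map_one,
        one_mul]
  have htop : E⟮y 1⟯ = ⊤ := by
    rw [← restrictScalars_eq_top_iff (K := K), eq_top_iff, ← hy, adjoin_le_iff]
    have hE : ∀ w ∈ E, w ∈ E⟮y 1⟯ := fun w hw =>
      adjoin.range_algebraMap_subset E {y 1} ⟨⟨w, hw⟩, rfl⟩
    rintro _ ⟨i, rfl⟩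
    exact mem_of_powIndexRatio_mem (L := (E⟮y 1⟯).toSubfield) hp ht hy0
      (hE _ (subset_adjoin _ _ (.inl (.inl rfl)))) (mem_adjoin_simple_self E (y 1))
      (fun i hi hi' => hE _ (subset_adjoin _ _ (.inl (.inr ⟨i, hi, hi', rfl⟩)))) i
  have hpow : y 1 ^ p = algebraMap E F ⟨_, subset_adjoin _ _ (.inr rfl)⟩ := rfl
  have := finiteDimensional_of_adjoin_eq_top htop
    (.of_pow hp.pos (hpow ▸ isIntegral_algebraMap))
  refine (eq_of_le_of_finrank_le' hle ?_).symm
  rw [finrank_fixedField_zpowers (orderOf_pos_iff.1 (horder ▸ hp.pos)), horder]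
  exact finrank_le_of_adjoin_eq_top_of_pow_mem htop hp.ne_zero hpow

end DiagonalAction

theorem stmt_14_general (p : ℕ) (hp : p.Prime) [NeZero p] (K : Type) [Field K]
    (ζ : K) (hζ : IsPrimitiveRoot ζ p)
    (F : Type) [Field F] [Algebra (MvPolynomial (Fin p) K) F]
    [IsFractionRing (MvPolynomial (Fin p) K) F] [Algebra K F]
    [IsScalarTower K (MvPolynomial (Fin p) K) F]
    (σ : F ≃ₐ[K] F)
    (hσ : ∀ i : Fin p, σ (algebraMap (MvPolynomial (Fin p) K) F (MvPolynomial.X i)) =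
      algebraMap K F (ζ ^ (i : ℕ)) * algebraMap (MvPolynomial (Fin p) K) F (MvPolynomial.X i))
    (t : ℕ) (ht : orderOf ((t : ZMod p)) = p - 1) :
    IntermediateField.fixedField (Subgroup.zpowers σ) =
      IntermediateField.adjoin K
        ({algebraMap (MvPolynomial (Fin p) K) F (MvPolynomial.X (0 : Fin p))} ∪
         {w : F | ∃ i : ℕ, 1 ≤ i ∧ i ≤ p - 2 ∧
            w = algebraMap (MvPolynomial (Fin p) K) F
                  (MvPolynomial.X (⟨t ^ i % p, Nat.mod_lt _ hp.pos⟩ : Fin p)) /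
                (algebraMap (MvPolynomial (Fin p) K) F
                  (MvPolynomial.X (⟨t ^ (i - 1) % p, Nat.mod_lt _ hp.pos⟩ : Fin p))) ^ t} ∪
         {(algebraMap (MvPolynomial (Fin p) K) F (MvPolynomial.X (1 : Fin p))) ^ p}) := by
  have hy : adjoin K (Set.range fun i => algebraMap (MvPolynomial (Fin p) K) F (X i)) = ⊤ := by
    rw [Set.range_comp', IsFractionRing.adjoin_image_eq_top (adjoin_range_X (R := K))]
  exact fixedField_zpowers_eq_adjoin hp hζ hy
    (fun i => (map_ne_zero_iff _ (IsFractionRing.injective _ F)).2 (X_ne_zero i)) hσ ht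

/-- let `p` be a prime and `K` a field of characteristic zero containing a
primitive `p`-th root of unity `ζ_p`.  Let `σ` act on the rational function field
`F = K(y_0, …, y_{p-1})` by `σ(y_i) = ζ_p^i y_i`, fixing `K`.  Then the fixed field of
`⟨σ⟩` is `K(y_0, z_1, …, z_{p-1})`, where `z_i = y_{t^i mod p}/(y_{t^{i-1} mod p})^t` for
`1 ≤ i ≤ p - 2` and `z_{p-1} = y_1^p`, for any integer `t` generating `(ℤ/pℤ)ˣ`. -/
theorem stmt_14 (p : ℕ) (hp : p.Prime) [NeZero p] (K : Type) [Field K] [CharZero K]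
    (ζ : K) (hζ : IsPrimitiveRoot ζ p)
    (F : Type) [Field F] [Algebra (MvPolynomial (Fin p) K) F]
    [IsFractionRing (MvPolynomial (Fin p) K) F] [Algebra K F]
    [IsScalarTower K (MvPolynomial (Fin p) K) F]
    (σ : F ≃ₐ[K] F)
    (hσ : ∀ i : Fin p, σ (algebraMap (MvPolynomial (Fin p) K) F (MvPolynomial.X i)) =
      algebraMap K F (ζ ^ (i : ℕ)) * algebraMap (MvPolynomial (Fin p) K) F (MvPolynomial.X i))
    (t : ℕ) (ht : orderOf ((t : ZMod p)) = p - 1) :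
    IntermediateField.fixedField (Subgroup.zpowers σ) =
      IntermediateField.adjoin K
        ({algebraMap (MvPolynomial (Fin p) K) F (MvPolynomial.X (0 : Fin p))} ∪
         {w : F | ∃ i : ℕ, 1 ≤ i ∧ i ≤ p - 2 ∧
            w = algebraMap (MvPolynomial (Fin p) K) F
                  (MvPolynomial.X (⟨t ^ i % p, Nat.mod_lt _ hp.pos⟩ : Fin p)) /
                (algebraMap (MvPolynomial (Fin p) K) F
                  (MvPolynomial.X (⟨t ^ (i - 1) % p, Nat.mod_lt _ hp.pos⟩ : Fin p))) ^ t} ∪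
         {(algebraMap (MvPolynomial (Fin p) K) F (MvPolynomial.X (1 : Fin p))) ^ p}) :=
  stmt_14_general p hp K ζ hζ F σ hσ t ht
end
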